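/- arXiv:2512.19233 — 3 statements merged into one kernel-verified Lean document; each statement's English description precedes it below -/
import Mathlib

section
/- For every integer n ≥ 4, the maximum over all 3-element subsets {u, v, w} of vertices of CW_n of the number of common neighbors |CN_{CW_n}(u, v, w)| equals 3; that is, any three distinct vertices of CW_n have at most 3 common neighbors, and some three distinct vertices of CW_n have exactly 3 common neighbors. -/
/-- The generating set S₂ = {(1 j) : 2 ≤ j ≤ n} ∪ {(j j+1) : 2 ≤ j ≤ n−1} ∪ {(2 n)},
where elements of {1,…,n} are encoded zero-indexed as `Fin n` (value k represents k+1). -/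
def cwGen (n : ℕ) : Set (Equiv.Perm (Fin n)) :=
  {s | ∃ i j : Fin n, s = Equiv.swap i j ∧
      (((i : ℕ) = 0 ∧ j ≠ i) ∨
       ((j : ℕ) = (i : ℕ) + 1 ∧ 1 ≤ (i : ℕ)) ∨
       ((i : ℕ) = 1 ∧ (j : ℕ) = n - 1))}

/-- The Cayley graph CW_n = Cay(S_n, S₂). -/
def CW (n : ℕ) : SimpleGraph (Equiv.Perm (Fin n)) where
  Adj g h := g ≠ h ∧ g⁻¹ * h ∈ cwGen n
  symm := ⟨by
    rintro g h ⟨hne, i, j, hs, hc⟩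
    refine ⟨hne.symm, i, j, ?_, hc⟩
    have hinv : h⁻¹ * g = (g⁻¹ * h)⁻¹ := by group
    rw [hinv, hs, Equiv.swap_inv]⟩
  loopless := ⟨fun g h => h.1 rfl⟩

/-!
Every generator in `S₂` is a transposition. If `x` is a common neighbour of `u ≠ v`, then
`s = x⁻¹ u` and `s (u⁻¹ v) = x⁻¹ v` are both transpositions. Writing `π = u⁻¹ v = (p q)(r t)`,
such an `s` must be `(a π(a))` for some `a` moved by `π`, and this is `(p q)` unless
`a ∈ {r, t}`; so already two distinct vertices have at most three common neighbours.

Conversely, `(1 2)`, `(1 3)` and `(2 3)` all lie in `S₂`, and in `S₃` a transposition times an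
even permutation is again a transposition. Hence the three transpositions and the three even
permutations of `{1, 2, 3}` span a `K₃,₃` in `CW_n`.
-/

open Equiv Equiv.Perm

namespace Equiv.Perm

variable {α β : Type*} [DecidableEq α]

theorem IsSwap.eq_swap_of_apply_ne {τ : Perm α} (hτ : τ.IsSwap) {x y : α} (hxy : x ≠ y)
    (hx : τ x ≠ x) (hy : τ y ≠ y) : τ = swap x y := by
  obtain ⟨c, d, -, rfl⟩ := hτ
  rw [swap_apply_ne_self_iff] at hx hy
  rcases hx with ⟨-, rfl | rfl⟩ <;> rcases hy with ⟨-, rfl | rfl⟩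
  exacts [absurd rfl hxy, rfl, swap_comm _ _, absurd rfl hxy]

theorem IsSwap.exists_eq_swap_apply {π s : Perm α} (hs : s.IsSwap) (hsπ : (s * π).IsSwap)
    (hπ : π ≠ 1) : ∃ a, π a ≠ a ∧ s = swap a (π a) := by
  obtain ⟨x, y, hxy, rfl⟩ := hs
  have hπ_apply : ∀ a, π a = swap x y ((swap x y * π) a) := fun a => by simp
  have hfix : (swap x y * π) x = x ∨ (swap x y * π) y = y := by
    by_contra! h
    exact hπ (by rw [← swap_mul_self_mul x y π, hsπ.eq_swap_of_apply_ne hxy h.1 h.2,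
      swap_mul_self])
  rcases hfix with hx | hy
  · have : π x = y := by rw [hπ_apply, hx, swap_apply_left]
    exact ⟨x, this ▸ hxy.symm, this ▸ rfl⟩
  · have : π y = x := by rw [hπ_apply, hy, swap_apply_right]
    exact ⟨y, this ▸ hxy, this ▸ swap_comm x y⟩

theorem ncard_setOf_isSwap_mul_isSwap_le_three {π : Perm α} (hπ : π ≠ 1) :
    {s : Perm α | s.IsSwap ∧ (s * π).IsSwap}.ncard ≤ 3 := by
  rcases Set.eq_empty_or_nonempty {s : Perm α | s.IsSwap ∧ (s * π).IsSwap} with h | h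
  · simp [h]
  obtain ⟨_, ⟨p, q, -, rfl⟩, r, t, -, hτ⟩ := h
  have hπ_eq : π = swap p q * swap r t := by rw [← hτ, swap_mul_self_mul]
  have hsub : {s : Perm α | s.IsSwap ∧ (s * π).IsSwap} ⊆
      {swap p q, swap r (π r), swap t (π t)} := by
    rintro s ⟨hs, hsπ⟩
    obtain ⟨a, ha, rfl⟩ := hs.exists_eq_swap_apply hsπ hπ
    by_cases hart : a = r ∨ a = t
    · rcases hart with rfl | rfl <;> simp
    push Not at hart
    have hπa : π a = swap p q a := by
      rw [hπ_eq, mul_apply, swap_apply_of_ne_of_ne hart.1 hart.2]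
    rw [hπa] at ha ⊢
    rcases (swap_apply_ne_self_iff.mp ha).2 with rfl | rfl <;> simp [swap_comm]
  calc _ ≤ ({swap p q, swap r (π r), swap t (π t)} : Set (Perm α)).ncard :=
        Set.ncard_le_ncard hsub (Set.toFinite _)
    _ ≤ 3 := by grw [Set.ncard_insert_le, Set.ncard_insert_le, Set.ncard_singleton]

theorem viaEmbeddingHom_swap [DecidableEq β] (ι : α ↪ β) (a b : α) :
    viaEmbeddingHom ι (swap a b) = swap (ι a) (ι b) := by
  ext x
  rw [viaEmbeddingHom_apply]
  by_cases hx : x ∈ Set.range ι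
  · obtain ⟨y, rfl⟩ := hx
    rw [viaEmbedding_apply, ι.swap_apply]
  · rw [viaEmbedding_apply_of_notMem _ _ _ hx,
      swap_apply_of_ne_of_ne (fun h => hx ⟨a, h.symm⟩) (fun h => hx ⟨b, h.symm⟩)]

end Equiv.Perm

def transpositionsFin3 : Finset (Perm (Fin 3)) := {swap 0 1, swap 0 2, swap 1 2}

def evenPermsFin3 : Finset (Perm (Fin 3)) := {1, finRotate 3, finRotate 3 * finRotate 3}

theorem inv_mul_mem_transpositionsFin3 :
    ∀ x ∈ transpositionsFin3, ∀ y ∈ evenPermsFin3, x⁻¹ * y ∈ transpositionsFin3 := by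
  decide

namespace CW

variable {n : ℕ}

theorem isSwap_of_mem_cwGen (hn : n ≠ 2) {s : Perm (Fin n)} (hs : s ∈ cwGen n) : s.IsSwap := by
  obtain ⟨i, j, rfl, hij⟩ := hs
  refine ⟨i, j, fun h => ?_, rfl⟩
  subst h
  omega

theorem isSwap_of_adj (hn : n ≠ 2) {g h : Perm (Fin n)} (hgh : (CW n).Adj g h) :
    (g⁻¹ * h).IsSwap :=
  isSwap_of_mem_cwGen hn hgh.2

theorem ncard_commonNeighbors_le_three (hn : n ≠ 2) {u v : Perm (Fin n)} (huv : u ≠ v) :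
    ((CW n).commonNeighbors u v).ncard ≤ 3 := by
  have hπ : u⁻¹ * v ≠ 1 := by rwa [Ne, inv_mul_eq_one]
  refine le_trans (Set.ncard_le_ncard_of_injOn (fun x => x⁻¹ * u) ?_ ?_)
    (ncard_setOf_isSwap_mul_isSwap_le_three hπ)
  · rintro x ⟨hux, hvx⟩
    refine ⟨isSwap_of_adj hn hux.symm, ?_⟩
    simpa [mul_assoc] using isSwap_of_adj hn hvx.symm
  · intro x _ y _ hxy
    simpa using hxy

noncomputable abbrev embedFin3 (hn : 3 ≤ n) : Perm (Fin 3) →* Perm (Fin n) :=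
  viaEmbeddingHom (Fin.castLEEmb hn)

theorem embedFin3_mem_cwGen (hn : 3 ≤ n) {σ : Perm (Fin 3)} (hσ : σ ∈ transpositionsFin3) :
    embedFin3 hn σ ∈ cwGen n := by
  simp only [transpositionsFin3, Finset.mem_insert, Finset.mem_singleton] at hσ
  rcases hσ with rfl | rfl | rfl <;> rw [viaEmbeddingHom_swap] <;>
    exact ⟨_, _, rfl, by simp [Fin.ext_iff]⟩

theorem adj_embedFin3 (hn : 3 ≤ n) {x y : Perm (Fin 3)} (hxy : x⁻¹ * y ∈ transpositionsFin3) :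
    (CW n).Adj (embedFin3 hn x) (embedFin3 hn y) := by
  refine ⟨fun h => ?_, by rw [← map_inv, ← map_mul]; exact embedFin3_mem_cwGen hn hxy⟩
  rw [(viaEmbeddingHom_injective _).eq_iff] at h
  subst h
  rw [inv_mul_cancel] at hxy
  exact absurd hxy (by decide)

theorem image_evenPermsFin3_subset_neighborSet (hn : 3 ≤ n) {x : Perm (Fin 3)}
    (hx : x ∈ transpositionsFin3) :
    embedFin3 hn '' evenPermsFin3 ⊆ (CW n).neighborSet (embedFin3 hn x) := by
  rintro _ ⟨y, hy, rfl⟩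
  exact adj_embedFin3 hn (inv_mul_mem_transpositionsFin3 x hx y hy)

end CW

/-- For n ≥ 4, the maximum number of common neighbors of three distinct vertices of CW_n is 3. -/
theorem stmt3 (n : ℕ) (hn : 4 ≤ n) :
    (∀ u v w : Equiv.Perm (Fin n), u ≠ v → u ≠ w → v ≠ w →
      ((CW n).neighborSet u ∩ (CW n).neighborSet v ∩ (CW n).neighborSet w).ncard ≤ 3) ∧
    (∃ u v w : Equiv.Perm (Fin n), u ≠ v ∧ u ≠ w ∧ v ≠ w ∧
      ((CW n).neighborSet u ∩ (CW n).neighborSet v ∩ (CW n).neighborSet w).ncard = 3) := by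
  have upper : ∀ u v w : Perm (Fin n), u ≠ v →
      ((CW n).neighborSet u ∩ (CW n).neighborSet v ∩ (CW n).neighborSet w).ncard ≤ 3 :=
    fun u v w huv => (Set.ncard_le_ncard Set.inter_subset_left).trans
      (CW.ncard_commonNeighbors_le_three (by omega) huv)
  refine ⟨fun u v w huv _ _ => upper u v w huv, ?_⟩
  have h3 : 3 ≤ n := by omega
  set ι := CW.embedFin3 h3
  have hinj : Function.Injective ι := viaEmbeddingHom_injective _
  have hsub : ∀ x ∈ transpositionsFin3, ι '' evenPermsFin3 ⊆ (CW n).neighborSet (ι x) :=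
    fun _ => CW.image_evenPermsFin3_subset_neighborSet h3
  refine ⟨ι (swap 0 1), ι (swap 0 2), ι (swap 1 2), hinj.ne (by decide), hinj.ne (by decide),
    hinj.ne (by decide), le_antisymm (upper _ _ _ (hinj.ne (by decide))) ?_⟩
  calc 3 = (ι '' evenPermsFin3).ncard := by
        rw [Set.ncard_image_of_injective _ hinj, Set.ncard_coe_finset]; rfl
    _ ≤ _ := Set.ncard_le_ncard <| Set.subset_inter
        (Set.subset_inter (hsub _ (by decide)) (hsub _ (by decide))) (hsub _ (by decide))
end

section
/- Let G be a k-regular connected simple graph and let r = max{|CN_G(u, v, w)| : {u, v, w} ⊆ V(G), u, v, w distinct} be the maximum number of common neighbors of any three distinct vertices of G. Then the 3-path-connectivity of G satisfies π₃(G) ≤ ⌊(3k − r)/4⌋. -/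
/-- An Ω-path in `G`: a path containing every vertex of Ω. -/
structure OmegaPath {V : Type*} (G : SimpleGraph V) (Ω : Set V) where
  u : V
  v : V
  walk : G.Walk u v
  isPath : walk.IsPath
  contains : ∀ x ∈ Ω, x ∈ walk.support

/-- Two Ω-paths are internally disjoint if their vertex sets intersect exactly in Ω
and they share no edge. -/
def OmegaPath.InternallyDisjoint {V : Type*} {G : SimpleGraph V} {Ω : Set V}
    (P Q : OmegaPath G Ω) : Prop :=
  {x | x ∈ P.walk.support} ∩ {x | x ∈ Q.walk.support} = Ω ∧
  ∀ e ∈ P.walk.edges, e ∉ Q.walk.edges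

/-- π_G(Ω): the maximum number of pairwise internally disjoint Ω-paths in G. -/
noncomputable def piOmega {V : Type*} (G : SimpleGraph V) (Ω : Set V) : ℕ :=
  sSup {k | ∃ f : Fin k → OmegaPath G Ω,
    ∀ i j, i ≠ j → (f i).InternallyDisjoint (f j)}

/-- The k-path-connectivity π_k(G) = min{π_G(Ω) : Ω ⊆ V(G), |Ω| = k}. -/
noncomputable def pathConn {V : Type*} (G : SimpleGraph V) (k : ℕ) : ℕ :=
  sInf {m | ∃ Ω : Finset V, Ω.card = k ∧ piOmega G (Ω : Set V) = m}

/-!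
Fix three vertices `Ω = {u, v, w}` realising `r` and `n` internally disjoint `Ω`-paths.
Count, for `a ∈ Ω`, the `k` edges at `a`: each path is a path through all of `Ω`, so it uses
at least `2 * 3 - 2 = 4` of these edges (two at an interior vertex of `Ω`, one at each other),
and the paths are edge-disjoint. Moreover, for every common neighbour `x` of `Ω` some edge
`a x` is unused: the paths meet only in `Ω ∌ x`, so all three edges `u x, v x, w x` would lie
on a single path, where `x` has at most two neighbours. Hence `4 n + r ≤ 3 k`.
-/

open Finset SimpleGraph

section

variable {V : Type*} {G : SimpleGraph V}

namespace SimpleGraph.Walk.IsPath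

variable {u v : V} {p : G.Walk u v}

lemma ncard_neighborSet_toSubgraph_eq_one (hp : p.IsPath) (hnil : ¬ p.Nil) {x : V}
    (hx : x = u ∨ x = v) : (p.toSubgraph.neighborSet x).ncard = 1 := by
  rcases hx with rfl | rfl
  · rw [hp.neighborSet_toSubgraph_startpoint hnil, Set.ncard_singleton]
  · rw [hp.neighborSet_toSubgraph_endpoint hnil, Set.ncard_singleton]

lemma ncard_neighborSet_toSubgraph_eq_two (hp : p.IsPath) {x : V} (hx : x ∈ p.support)
    (hxu : x ≠ u) (hxv : x ≠ v) : (p.toSubgraph.neighborSet x).ncard = 2 := by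
  obtain ⟨i, rfl, hi⟩ := mem_support_iff_exists_getVert.mp hx
  refine hp.ncard_neighborSet_toSubgraph_internal_eq_two ?_ ?_
  · rintro rfl
    exact hxu p.getVert_zero
  · refine hi.lt_of_ne ?_
    rintro rfl
    exact hxv p.getVert_length

lemma ncard_neighborSet_toSubgraph_le_two (hp : p.IsPath) (x : V) :
    (p.toSubgraph.neighborSet x).ncard ≤ 2 := by
  rcases (p.toSubgraph.neighborSet x).eq_empty_or_nonempty with hempty | ⟨y, hy⟩
  · simp [hempty]
  have hnil : ¬ p.Nil := fun hn => by
    simpa [edges_eq_nil.mpr hn] using adj_toSubgraph_iff_mem_edges.mp hy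
  by_cases hend : x = u ∨ x = v
  · rw [hp.ncard_neighborSet_toSubgraph_eq_one hnil hend]
    norm_num
  · rw [not_or] at hend
    rw [hp.ncard_neighborSet_toSubgraph_eq_two (mem_support_of_adj_toSubgraph hy) hend.1 hend.2]

lemma two_mul_card_le_sum_ncard_neighborSet_toSubgraph (hp : p.IsPath) (hnil : ¬ p.Nil)
    {s : Finset V} (hs : ∀ a ∈ s, a ∈ p.support) :
    2 * #s ≤ ∑ a ∈ s, (p.toSubgraph.neighborSet a).ncard + 2 := by
  classical
  calc 2 * #s = ∑ _a ∈ s, 2 := by rw [sum_const, smul_eq_mul, mul_comm]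
    _ ≤ ∑ a ∈ s, ((p.toSubgraph.neighborSet a).ncard +
          if a ∈ ({u, v} : Finset V) then 1 else 0) := by
      refine sum_le_sum fun a ha => ?_
      by_cases hend : a = u ∨ a = v
      · rw [hp.ncard_neighborSet_toSubgraph_eq_one hnil hend]
        simp [hend]
      · rw [not_or] at hend
        rw [hp.ncard_neighborSet_toSubgraph_eq_two (hs a ha) hend.1 hend.2]
        omega
    _ = ∑ a ∈ s, (p.toSubgraph.neighborSet a).ncard +
          #(s.filter (· ∈ ({u, v} : Finset V))) := by
      rw [sum_add_distrib, sum_boole, Nat.cast_id]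
    _ ≤ ∑ a ∈ s, (p.toSubgraph.neighborSet a).ncard + 2 := by
      gcongr
      exact (card_le_card fun a ha => (mem_filter.mp ha).2).trans card_le_two

end SimpleGraph.Walk.IsPath

namespace OmegaPath

section

variable {Ω : Set V}

lemma not_nil {a b : V} (ha : a ∈ Ω) (hb : b ∈ Ω) (hab : a ≠ b) (P : OmegaPath G Ω) :
    ¬ P.walk.Nil := fun hnil => by
  have hsupp := Walk.nil_iff_support_eq.mp hnil
  have ha' := P.contains a ha
  have hb' := P.contains b hb
  rw [hsupp, List.mem_singleton] at ha' hb'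
  exact hab (ha'.trans hb'.symm)

namespace InternallyDisjoint

variable {P Q : OmegaPath G Ω}

lemma mem_of_mem_support (h : P.InternallyDisjoint Q) {x : V} (hP : x ∈ P.walk.support)
    (hQ : x ∈ Q.walk.support) : x ∈ Ω :=
  h.1 ▸ ⟨hP, hQ⟩

lemma disjoint_neighborSet_toSubgraph (h : P.InternallyDisjoint Q) (a : V) :
    Disjoint (P.walk.toSubgraph.neighborSet a) (Q.walk.toSubgraph.neighborSet a) :=
  Set.disjoint_left.mpr fun _ hP hQ =>
    h.2 _ (Walk.adj_toSubgraph_iff_mem_edges.mp hP) (Walk.adj_toSubgraph_iff_mem_edges.mp hQ)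

end InternallyDisjoint

end

variable [Finite V] {ι : Type*} {Ω : Finset V} {f : ι → OmegaPath G Ω}

lemma exists_forall_not_adj_toSubgraph (hΩ : 3 ≤ #Ω)
    (hf : Pairwise fun i j => (f i).InternallyDisjoint (f j)) {x : V}
    (hx : ∀ a ∈ Ω, G.Adj a x) : ∃ a ∈ Ω, ∀ i, ¬ (f i).walk.toSubgraph.Adj a x := by
  by_contra! hused
  choose idx hidx using hused
  have hxΩ : x ∉ Ω := fun hx' => G.loopless.irrefl x (hx x hx')
  obtain ⟨a₀, ha₀⟩ : Ω.Nonempty := card_pos.mp (by omega)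
  have hsame : ∀ a (ha : a ∈ Ω), idx a ha = idx a₀ ha₀ := fun a ha => by
    by_contra hne
    exact hxΩ ((hf hne).mem_of_mem_support
      (Walk.mem_support_of_adj_toSubgraph (hidx a ha).symm)
      (Walk.mem_support_of_adj_toSubgraph (hidx a₀ ha₀).symm))
  have hsub : (Ω : Set V) ⊆ (f (idx a₀ ha₀)).walk.toSubgraph.neighborSet x := fun a ha => by
    rw [← hsame a ha]
    exact (hidx a ha).symm
  have hle := Set.ncard_le_ncard hsub (Set.toFinite _)
  rw [Set.ncard_coe_finset] at hle
  have := (f (idx a₀ ha₀)).isPath.ncard_neighborSet_toSubgraph_le_two x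
  omega

end OmegaPath

theorem card_mul_add_ncard_commonNeighbors_le [Fintype V] {ι : Type*} [Fintype ι]
    {Ω : Finset V} (hΩ : 3 ≤ #Ω) (f : ι → OmegaPath G Ω)
    (hf : Pairwise fun i j => (f i).InternallyDisjoint (f j)) :
    (2 * #Ω - 2) * Fintype.card ι + {x | ∀ a ∈ Ω, G.Adj a x}.ncard ≤
      ∑ a ∈ Ω, (G.neighborSet a).ncard := by
  classical
  set S : ι → V → Finset V := fun i a => ((f i).walk.toSubgraph.neighborSet a).toFinset
  set U : V → Finset V := fun a => (G.neighborSet a).toFinset \ univ.biUnion (S · a)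
  have hsplit : ∀ a, ∑ i, #(S i a) + #(U a) = (G.neighborSet a).ncard := fun a => by
    have hdisj : Set.PairwiseDisjoint ↑(univ : Finset ι) (S · a) := fun i _ j _ hij => by
      simpa [S] using (hf hij).disjoint_neighborSet_toSubgraph a
    have hsub : univ.biUnion (S · a) ⊆ (G.neighborSet a).toFinset := biUnion_subset.mpr
      fun i _ => Set.toFinset_subset_toFinset.mpr ((f i).walk.toSubgraph.neighborSet_subset a)
    rw [← card_biUnion hdisj, Set.ncard_eq_toFinset_card', add_comm,
      card_sdiff_add_card_eq_card hsub]
  have hpath : ∀ i, 2 * #Ω - 2 ≤ ∑ a ∈ Ω, #(S i a) := fun i => by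
    obtain ⟨a, ha, b, hb, hab⟩ := one_lt_card.mp (by omega : 1 < #Ω)
    have := (f i).isPath.two_mul_card_le_sum_ncard_neighborSet_toSubgraph
      ((f i).not_nil (mem_coe.mpr ha) (mem_coe.mpr hb) hab) fun a ha => (f i).contains a ha
    simp only [S, ← Set.ncard_eq_toFinset_card']
    omega
  have hcommon : {x | ∀ a ∈ Ω, G.Adj a x}.ncard ≤ ∑ a ∈ Ω, #(U a) := by
    have hsub : {x | ∀ a ∈ Ω, G.Adj a x} ⊆ ↑(Ω.biUnion U) := fun x hx => by
      obtain ⟨a, ha, hunused⟩ := OmegaPath.exists_forall_not_adj_toSubgraph hΩ hf hx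
      exact mem_biUnion.mpr ⟨a, ha, by simpa [U, S, hx a ha] using hunused⟩
    exact (Set.ncard_le_ncard hsub (Set.toFinite _)).trans
      ((Set.ncard_coe_finset _).trans_le card_biUnion_le)
  calc (2 * #Ω - 2) * Fintype.card ι + {x | ∀ a ∈ Ω, G.Adj a x}.ncard
      ≤ ∑ i, ∑ a ∈ Ω, #(S i a) + ∑ a ∈ Ω, #(U a) := by
        gcongr
        simpa [mul_comm] using sum_le_sum fun i (_ : i ∈ univ) => hpath i
    _ = ∑ a ∈ Ω, (∑ i, #(S i a) + #(U a)) := by rw [sum_comm, sum_add_distrib]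
    _ = ∑ a ∈ Ω, (G.neighborSet a).ncard := sum_congr rfl fun a _ => hsplit a

end

theorem stmt8_general {V : Type*} [Fintype V] (G : SimpleGraph V) (k r : ℕ)
    (hreg : ∀ v : V, (G.neighborSet v).ncard = k)
    (hr : IsGreatest {m : ℕ | ∃ u v w : V, u ≠ v ∧ u ≠ w ∧ v ≠ w ∧
      m = (G.neighborSet u ∩ G.neighborSet v ∩ G.neighborSet w).ncard} r) :
    pathConn G 3 ≤ (3 * k - r) / 4 := by
  classical
  obtain ⟨⟨u, v, w, huv, huw, hvw, rfl⟩, -⟩ := hr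
  set Ω : Finset V := {u, v, w}
  have hΩ : #Ω = 3 := card_eq_three.mpr ⟨u, v, w, huv, huw, hvw, rfl⟩
  have hcommon :
      {x | ∀ a ∈ Ω, G.Adj a x} = G.neighborSet u ∩ G.neighborSet v ∩ G.neighborSet w := by
    ext x
    simp [Ω, and_assoc]
  have hΩmem : piOmega G Ω ∈ {m | ∃ Ω : Finset V, #Ω = 3 ∧ piOmega G Ω = m} := ⟨Ω, hΩ, rfl⟩
  refine (Nat.sInf_le hΩmem).trans (csSup_le ⟨0, Fin.elim0, fun i => i.elim0⟩ ?_)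
  rintro n ⟨f, hf⟩
  have hcount := card_mul_add_ncard_commonNeighbors_le hΩ.ge f fun i j hij => hf i j hij
  rw [hΩ, hcommon, Fintype.card_fin, sum_congr rfl fun a _ => hreg a, sum_const, hΩ,
    smul_eq_mul] at hcount
  rw [Nat.le_div_iff_mul_le (by norm_num)]
  omega

/-- For a k-regular connected graph G, with r the maximum number of common neighbors of
any three distinct vertices, π₃(G) ≤ ⌊(3k − r)/4⌋. -/
theorem stmt8 {V : Type*} [Fintype V] (G : SimpleGraph V) (k r : ℕ)
    (hreg : ∀ v : V, (G.neighborSet v).ncard = k) (hconn : G.Connected)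
    (hr : IsGreatest {m : ℕ | ∃ u v w : V, u ≠ v ∧ u ≠ w ∧ v ≠ w ∧
      m = (G.neighborSet u ∩ G.neighborSet v ∩ G.neighborSet w).ncard} r) :
    pathConn G 3 ≤ (3 * k - r) / 4 :=
  stmt8_general G k r hreg hr
end

section
/- For every integer n ≥ 4 and any two distinct indices i, j ∈ {1,…,n}, the number of edges of CW_n with one endpoint in CW_n^i and the other endpoint in CW_n^j equals 3·(n − 2)!. -/
open Equiv Nat

section Swaps

variable {α : Type*} [DecidableEq α]

theorem swap_eq_swap_iff_of_ne {p q k a : α} (hka : k ≠ a) :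
    swap p q = swap k a ↔ (p = k ∧ q = a) ∨ (p = a ∧ q = k) := by
  constructor
  · intro h
    have hk : swap p q a = k := by rw [h, swap_apply_right]
    obtain ⟨-, rfl | rfl⟩ := swap_apply_ne_self_iff.mp (hk ▸ hka)
    · rw [swap_apply_left] at hk
      exact Or.inr ⟨rfl, hk⟩
    · rw [swap_apply_right] at hk
      exact Or.inl ⟨hk, rfl⟩
  · rintro (⟨rfl, rfl⟩ | ⟨rfl, rfl⟩)
    · rfl
    · exact swap_comm _ _

theorem exists_swap_eq_swap_of_apply_ne {p q a : α} (h : swap p q a ≠ a) :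
    ∃ k ≠ a, swap p q = swap k a := by
  obtain ⟨hpq, rfl | rfl⟩ := swap_apply_ne_self_iff.mp h
  · exact ⟨q, hpq.symm, swap_comm _ _⟩
  · exact ⟨p, hpq, rfl⟩

end Swaps

section PermCount

variable {α : Type*} [Finite α] [DecidableEq α]

theorem ncard_perm_fixing_two {a b : α} (hab : a ≠ b) :
    {σ : Perm α | σ a = a ∧ σ b = b}.ncard = (Nat.card α - 2)! := by
  let moved : Set α := ({a, b} : Set α)ᶜ
  have hfix (σ : Perm α) : (σ a = a ∧ σ b = b) ↔ ∀ x, x ∉ moved → σ x = x := by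
    constructor
    · rintro ⟨ha, hb⟩ x hx
      obtain rfl | rfl : x = a ∨ x = b := by simpa [moved, or_iff_not_imp_left] using hx
      exacts [ha, hb]
    · intro h
      exact ⟨h a (by simp [moved]), h b (by simp [moved])⟩
  have e : {σ : Perm α | σ a = a ∧ σ b = b} ≃ Perm moved :=
    (subtypeEquivRight hfix).trans (Perm.subtypeEquivSubtypePerm (· ∈ moved)).symm
  rw [← Nat.card_coe_set_eq, Nat.card_congr e, Nat.card_perm, Nat.card_coe_set_eq,
    Set.ncard_compl, Set.ncard_pair hab]

theorem ncard_perm_apply_eq_apply_eq {a b c d : α} (hab : a ≠ b) (hcd : c ≠ d) :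
    {σ : Perm α | σ a = c ∧ σ b = d}.ncard = (Nat.card α - 2)! := by
  obtain ⟨τ, rfl, rfl⟩ : ∃ τ : Perm α, τ a = c ∧ τ b = d := by
    have hcb : swap a c b ≠ c := fun h =>
      hab ((swap a c).injective (by rw [h, swap_apply_left]))
    refine ⟨swap (swap a c b) d * swap a c, ?_, ?_⟩
    · simp only [Perm.mul_apply, swap_apply_left]
      exact swap_apply_of_ne_of_ne hcb.symm hcd
    · simp only [Perm.mul_apply, swap_apply_left]
  have htranslate : {σ : Perm α | σ a = τ a ∧ σ b = τ b} =
      (τ * ·) '' {σ : Perm α | σ a = a ∧ σ b = b} := by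
    ext σ
    simp [Set.image_mul_left, Equiv.eq_symm_apply, eq_comm]
  rw [htranslate, Set.ncard_image_of_injective _ (mul_right_injective τ),
    ncard_perm_fixing_two hab]

end PermCount

section CrossEdges

variable {α : Type*} [DecidableEq α]

def swapEdges (a k i j : α) : Set (Sym2 (Perm α)) :=
  (fun u => s(u, u * swap k a)) '' {u | u a = i ∧ u k = j}

theorem eq_and_eq_of_mk_mul_swap_eq {a k k' : α} {u v : Perm α} (huv : u a ≠ v k')
    (h : s(u, u * swap k a) = s(v, v * swap k' a)) : u = v ∧ k = k' := by
  rcases Sym2.eq_iff.mp h with ⟨rfl, h⟩ | ⟨rfl, -⟩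
  · exact ⟨rfl, swap_injective_of_right a (mul_left_cancel h)⟩
  · exact absurd (by rw [Perm.mul_apply, swap_apply_right]) huv

theorem ncard_swapEdges [Finite α] {a k i j : α} (hka : k ≠ a) (hij : i ≠ j) :
    (swapEdges a k i j).ncard = (Nat.card α - 2)! := by
  rw [swapEdges, Set.InjOn.ncard_image, ncard_perm_apply_eq_apply_eq hka.symm hij]
  rintro u ⟨hu, -⟩ v ⟨-, hv⟩ h
  exact (eq_and_eq_of_mk_mul_swap_eq (hu ▸ hv ▸ hij) h).1

theorem disjoint_swapEdges {a k k' i j : α} (hij : i ≠ j) (hkk' : k ≠ k') :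
    Disjoint (swapEdges a k i j) (swapEdges a k' i j) := by
  rw [Set.disjoint_left]
  rintro _ ⟨u, ⟨hu, -⟩, rfl⟩ ⟨v, ⟨-, hv⟩, h⟩
  exact hkk' (eq_and_eq_of_mk_mul_swap_eq (hu ▸ hv ▸ hij) h.symm).2

variable {G : SimpleGraph (Perm α)} {S : Set (Perm α)}

theorem crossEdges_eq_biUnion_swapEdges (hG : ∀ g h, G.Adj g h ↔ g ≠ h ∧ g⁻¹ * h ∈ S)
    (hS : ∀ s ∈ S, ∃ x y, s = swap x y) {i j : α} (hij : i ≠ j) (a : α) :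
    {e ∈ G.edgeSet | ∃ u v : Perm α, e = s(u, v) ∧ u a = i ∧ v a = j} =
      ⋃ k ∈ {k | k ≠ a ∧ swap k a ∈ S}, swapEdges a k i j := by
  ext e
  simp only [Set.mem_iUnion, Set.mem_ofPred_eq, exists_prop]
  constructor
  · rintro ⟨he, u, v, rfl, hu, hv⟩
    obtain ⟨huv, hgen⟩ := (hG u v).mp he
    obtain ⟨p, q, hpq⟩ := hS _ hgen
    have hv' : v = u * swap p q := by rw [← hpq, mul_inv_cancel_left]
    have hmoved : swap p q a ≠ a := fun h => hij (by rw [← hu, ← hv, hv', Perm.mul_apply, h])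
    obtain ⟨k, hka, hk⟩ := exists_swap_eq_swap_of_apply_ne hmoved
    refine ⟨k, ⟨hka, hk ▸ hpq ▸ hgen⟩, u, ⟨hu, ?_⟩, by rw [hv', hk]⟩
    rw [← hv, hv', hk, Perm.mul_apply, swap_apply_right]
  · rintro ⟨k, ⟨hka, hgen⟩, u, ⟨hu, huk⟩, rfl⟩
    refine ⟨(hG _ _).mpr ⟨?_, ?_⟩, u, _, rfl, hu, by rw [Perm.mul_apply, swap_apply_right, huk]⟩
    · simpa [eq_comm] using hka
    · rwa [inv_mul_cancel_left]

theorem ncard_crossEdges [Finite α] (hG : ∀ g h, G.Adj g h ↔ g ≠ h ∧ g⁻¹ * h ∈ S)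
    (hS : ∀ s ∈ S, ∃ x y, s = swap x y) {i j : α} (hij : i ≠ j) (a : α) :
    {e ∈ G.edgeSet | ∃ u v : Perm α, e = s(u, v) ∧ u a = i ∧ v a = j}.ncard =
      {k | k ≠ a ∧ swap k a ∈ S}.ncard * (Nat.card α - 2)! := by
  rw [crossEdges_eq_biUnion_swapEdges hG hS hij,
    Set.Finite.ncard_biUnion (Set.toFinite _) (fun _ _ => Set.toFinite _)
      (fun _ _ _ _ hkk' => disjoint_swapEdges hij hkk'),
    finsum_mem_congr rfl fun k hk => ncard_swapEdges hk.1 hij, ← finsum_one, finsum_mem_mul,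
    one_mul]

end CrossEdges

theorem swap_partners_cwGen {n : ℕ} (hn : 4 ≤ n) (a : Fin n) (ha : (a : ℕ) = n - 1) :
    {k | k ≠ a ∧ swap k a ∈ cwGen n} = {⟨0, by omega⟩, ⟨1, by omega⟩, ⟨n - 2, by omega⟩} := by
  ext k
  simp only [cwGen, Set.mem_ofPred_eq, Set.mem_insert_iff, Set.mem_singleton_iff, Fin.ext_iff]
  constructor
  · rintro ⟨hka, p, q, hs, hpq⟩
    rcases (swap_eq_swap_iff_of_ne hka).mp hs.symm with ⟨rfl, rfl⟩ | ⟨rfl, rfl⟩ <;>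
      simp only [← Fin.val_ne_iff] at hpq hka <;> omega
  · intro hk
    have hka : k ≠ a := fun h => by rw [Fin.ext_iff] at h; omega
    refine ⟨hka, ?_⟩
    rcases hk with hk | hk | hk
    · exact ⟨k, a, rfl, Or.inl ⟨hk, hka.symm⟩⟩
    · exact ⟨k, a, rfl, Or.inr (Or.inr ⟨hk, ha⟩)⟩
    · exact ⟨k, a, rfl, Or.inr (Or.inl ⟨by omega, by omega⟩)⟩

/-- For n ≥ 4 and distinct indices i, j, the number of edges of CW_n between the copies
CW_n^i and CW_n^j equals 3·(n−2)!.
(The copy CW_n^i consists of those σ with σ(n) = i; indices are zero-indexed in `Fin n`.) -/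
theorem stmt12 (n : ℕ) (hn : 4 ≤ n) (i j : Fin n) (hij : i ≠ j) :
    {e ∈ (CW n).edgeSet | ∃ u v : Equiv.Perm (Fin n),
        e = s(u, v) ∧ u ⟨n - 1, by omega⟩ = i ∧ v ⟨n - 1, by omega⟩ = j}.ncard
      = 3 * Nat.factorial (n - 2) := by
  have hS : ∀ s ∈ cwGen n, ∃ x y, s = swap x y := fun _ ⟨x, y, hs, _⟩ => ⟨x, y, hs⟩
  rw [ncard_crossEdges (fun _ _ => Iff.rfl) hS hij, swap_partners_cwGen hn _ rfl, Nat.card_fin,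
    Set.ncard_eq_three.mpr ⟨_, _, _, ?_, ?_, ?_, rfl⟩] <;>
    simp only [ne_eq, Fin.mk.injEq] <;> omega
end
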